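/- Let B be the symmetric bilinear form on ℝ^8 defined by B(u,v) = u_1v_1 + u_2v_2 + u_3v_3 + u_4v_4 − u_5v_5 − u_6v_6 − u_7v_7 − u_8v_8. Let P be a 4 × 4 real matrix and let R ⊆ ℝ^8 be the span of the four vectors r_i = e_i + Σ_{j=1}^{4} P_{ij} e_{4+j} for i = 1, 2, 3, 4 (the row space of the block matrix [I_4 | P]). Then R = R^± if and only if Pᵀ P = I_4, i.e., P is an orthogonal matrix. -/
import Mathlib

noncomputable section

/-- The standard basis vectors of `ℝ^8` (indexed `0,…,7` for `e_1,…,e_8`). -/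
def e (i : Fin 8) : Fin 8 → ℝ := Pi.single i 1

/-- The symmetric bilinear form
`B(u,v) = u₁v₁ + u₂v₂ + u₃v₃ + u₄v₄ − u₅v₅ − u₆v₆ − u₇v₇ − u₈v₈` on `ℝ^8`. -/
def Bform (u v : Fin 8 → ℝ) : ℝ :=
  u 0 * v 0 + u 1 * v 1 + u 2 * v 2 + u 3 * v 3
    - u 4 * v 4 - u 5 * v 5 - u 6 * v 6 - u 7 * v 7

/-- The `B`-orthogonal complement `R^± = {v : ∀ r ∈ R, B(v,r) = 0}` of a subspace. -/
def Bperp (R : Submodule ℝ (Fin 8 → ℝ)) : Submodule ℝ (Fin 8 → ℝ) where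
  carrier := {v | ∀ r ∈ R, Bform v r = 0}
  zero_mem' := by intro r hr; simp [Bform]
  add_mem' := by
    intro a b ha hb r hr
    have h1 := ha r hr
    have h2 := hb r hr
    simp only [Set.mem_setOf_eq, Bform, Pi.add_apply] at *
    linear_combination h1 + h2
  smul_mem' := by
    intro c a ha r hr
    have h1 := ha r hr
    simp only [Set.mem_setOf_eq, Bform, Pi.smul_apply, smul_eq_mul] at *
    linear_combination c * h1

/-- The spanning vectors `rᵢ = eᵢ + Σⱼ P i j • e_{4+j}`. -/
noncomputable def rvec (P : Matrix (Fin 4) (Fin 4) ℝ) (i : Fin 4) : Fin 8 → ℝ :=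
  e (Fin.castAdd 4 i) + ∑ j : Fin 4, P i j • e (Fin.natAdd 4 j)

lemma Bform_rvec (P : Matrix (Fin 4) (Fin 4) ℝ) (i k : Fin 4) :
    Bform (rvec P i) (rvec P k) = (if i = k then (1:ℝ) else 0) - ∑ j : Fin 4, P i j * P k j := by
  fin_cases i <;> fin_cases k <;>
    simp (config := { decide := true }) [rvec, e, Bform, Fin.sum_univ_four, Pi.single_apply] <;>
    ring

lemma Bform_symm (u v : Fin 8 → ℝ) : Bform u v = Bform v u := by
  simp only [Bform]; ring

/-- Linearity in the second argument, for span induction. -/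
lemma mem_Bperp_of_Bform_gen (R : Submodule ℝ (Fin 8 → ℝ)) (s : Set (Fin 8 → ℝ))
    (hR : R = Submodule.span ℝ s) (u : Fin 8 → ℝ)
    (h : ∀ x ∈ s, Bform u x = 0) : u ∈ Bperp R := by
  subst hR
  intro v hv
  induction hv using Submodule.span_induction with
  | mem x hx => exact h x hx
  | zero => simp [Bform]
  | add x y hx hy ihx ihy =>
    simp only [Bform, Pi.add_apply] at *
    linear_combination ihx + ihy
  | smul a x hx ih =>
    simp only [Bform, Pi.smul_apply, smul_eq_mul] at *
    linear_combination a * ih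

/-- Main reconstruction lemma: if `PᵀP = 1` and `v` is `B`-orthogonal to each `rvec P i`,
then `v` lies in their span. -/
lemma key_lemma (P : Matrix (Fin 4) (Fin 4) ℝ) (v : Fin 8 → ℝ)
    (hPtP : P.transpose * P = 1)
    (eqs : ∀ i : Fin 4, Bform v (rvec P i) = 0) :
    v = ∑ k : Fin 4, (∑ j : Fin 4, P k j * v (Fin.natAdd 4 j)) • rvec P k := by
  have ha0 : Fin.addNat (0:Fin 4) 4 = (4:Fin 8) := rfl
  have ha1 : Fin.addNat (1:Fin 4) 4 = (5:Fin 8) := rfl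
  have ha2 : Fin.addNat (2:Fin 4) 4 = (6:Fin 8) := rfl
  have ha3 : Fin.addNat (3:Fin 4) 4 = (7:Fin 8) := rfl
  have hc0 : Fin.castAdd 4 (0:Fin 4) = (0:Fin 8) := rfl
  have hc1 : Fin.castAdd 4 (1:Fin 4) = (1:Fin 8) := rfl
  have hc2 : Fin.castAdd 4 (2:Fin 4) = (2:Fin 8) := rfl
  have hc3 : Fin.castAdd 4 (3:Fin 4) = (3:Fin 8) := rfl
  have hn0 : Fin.natAdd 4 (0:Fin 4) = (4:Fin 8) := rfl
  have hn1 : Fin.natAdd 4 (1:Fin 4) = (5:Fin 8) := rfl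
  have hn2 : Fin.natAdd 4 (2:Fin 4) = (6:Fin 8) := rfl
  have hn3 : Fin.natAdd 4 (3:Fin 4) = (7:Fin 8) := rfl
  have hp : ∀ j l : Fin 4, ∑ k : Fin 4, P k j * P k l = if j = l then (1:ℝ) else 0 := by
    intro j l
    have := congrFun (congrFun hPtP j) l
    rw [Matrix.mul_apply] at this
    simpa [Matrix.transpose_apply, Matrix.one_apply] using this
  have hp' : ∀ j l : Fin 4,
      P 0 j * P 0 l + P 1 j * P 1 l + P 2 j * P 2 l + P 3 j * P 3 l
        = if j = l then (1:ℝ) else 0 := by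
    intro j l
    rw [← hp j l, Fin.sum_univ_four]
  have eqs' : ∀ i : Fin 4,
      v (Fin.castAdd 4 i) = P i 0 * v 4 + P i 1 * v 5 + P i 2 * v 6 + P i 3 * v 7 := by
    intro i
    have := eqs i
    fin_cases i <;>
      (simp (config := { decide := true }) [rvec, e, Bform, Fin.sum_univ_four, Pi.single_apply,
        ha0, ha1, ha2, ha3, hc0, hc1, hc2, hc3, hn0, hn1, hn2, hn3] at this ⊢; linarith)
  funext m
  fin_cases m <;>
    simp (config := { decide := true }) [rvec, e, Fin.sum_univ_four, Pi.single_apply,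
      Finset.sum_apply, Pi.smul_apply, ha0, ha1, ha2, ha3, hn0, hn1, hn2, hn3]
  · exact eqs' 0
  · exact eqs' 1
  · exact eqs' 2
  · exact eqs' 3
  · have h0 := hp' 0 0; rw [if_pos rfl] at h0
    have h1 := hp' 1 0; rw [if_neg (by decide)] at h1
    have h2 := hp' 2 0; rw [if_neg (by decide)] at h2
    have h3 := hp' 3 0; rw [if_neg (by decide)] at h3
    linear_combination -(v 4 * h0 + v 5 * h1 + v 6 * h2 + v 7 * h3)
  · have h0 := hp' 0 1; rw [if_neg (by decide)] at h0
    have h1 := hp' 1 1; rw [if_pos rfl] at h1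
    have h2 := hp' 2 1; rw [if_neg (by decide)] at h2
    have h3 := hp' 3 1; rw [if_neg (by decide)] at h3
    linear_combination -(v 4 * h0 + v 5 * h1 + v 6 * h2 + v 7 * h3)
  · have h0 := hp' 0 2; rw [if_neg (by decide)] at h0
    have h1 := hp' 1 2; rw [if_neg (by decide)] at h1
    have h2 := hp' 2 2; rw [if_pos rfl] at h2
    have h3 := hp' 3 2; rw [if_neg (by decide)] at h3
    linear_combination -(v 4 * h0 + v 5 * h1 + v 6 * h2 + v 7 * h3)
  · have h0 := hp' 0 3; rw [if_neg (by decide)] at h0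
    have h1 := hp' 1 3; rw [if_neg (by decide)] at h1
    have h2 := hp' 2 3; rw [if_neg (by decide)] at h2
    have h3 := hp' 3 3; rw [if_pos rfl] at h3
    linear_combination -(v 4 * h0 + v 5 * h1 + v 6 * h2 + v 7 * h3)

/-- Case 1 (pivot columns `{1,2,3,4}`): the row space of `[I₄ | P]`, i.e. the span of
the vectors `rᵢ = eᵢ + Σⱼ P i j • e_{4+j}`, is self-dual if and only if `PᵀP = I₄`,
i.e. `P` is an orthogonal matrix. -/
theorem case1_self_dual_iff_orthogonal (P : Matrix (Fin 4) (Fin 4) ℝ)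
    (R : Submodule ℝ (Fin 8 → ℝ))
    (hR : R = Submodule.span ℝ
        (Set.range fun i : Fin 4 =>
          e (Fin.castAdd 4 i) + ∑ j : Fin 4, P i j • e (Fin.natAdd 4 j))) :
    R = Bperp R ↔ P.transpose * P = 1 := by
  have hR' : R = Submodule.span ℝ (Set.range (rvec P)) := hR
  have hmem : ∀ i, rvec P i ∈ R := fun i => hR' ▸ Submodule.subset_span ⟨i, rfl⟩
  constructor
  · intro hs
    have h0 : ∀ i k : Fin 4, Bform (rvec P i) (rvec P k) = 0 := by
      intro i k
      have hi : rvec P i ∈ Bperp R := hs ▸ hmem i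
      exact hi (rvec P k) (hmem k)
    have hPPt : P * P.transpose = 1 := by
      ext i k
      have h := h0 i k
      rw [Bform_rvec] at h
      rw [Matrix.mul_apply]
      simp only [Matrix.transpose_apply, Matrix.one_apply]
      exact (sub_eq_zero.mp h).symm
    exact mul_eq_one_comm.mp hPPt
  · intro hPtP
    have hPPt : P * P.transpose = 1 := mul_eq_one_comm.mpr hPtP
    have horto : ∀ i k : Fin 4, Bform (rvec P i) (rvec P k) = 0 := by
      intro i k
      rw [Bform_rvec]
      have h := congrFun (congrFun hPPt i) k
      rw [Matrix.mul_apply] at h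
      simp only [Matrix.transpose_apply, Matrix.one_apply] at h
      rw [h]
      simp
    apply le_antisymm
    · conv_lhs => rw [hR']
      rw [Submodule.span_le]
      rintro _ ⟨i, rfl⟩
      exact mem_Bperp_of_Bform_gen R (Set.range (rvec P)) hR' (rvec P i)
        (by rintro _ ⟨k, rfl⟩; exact horto i k)
    · intro v hv
      have eqs : ∀ i : Fin 4, Bform v (rvec P i) = 0 := fun i => hv (rvec P i) (hmem i)
      have := key_lemma P v hPtP eqs
      rw [this]
      exact Submodule.sum_mem _ fun k _ => Submodule.smul_mem _ _ (hmem k)
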